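/- arXiv:1605.06297 — 5 statements merged into one kernel-verified Lean document; each statement's English description precedes it below -/
import Mathlib

section
/- For every a ∈ ℕ and d ∈ ℤ, the set E_{a,d} = {n ∈ ℕ : s₂(n+a) - s₂(n) = d} is a finite (possibly empty) union of sets of the form [w] = {n : the binary expansion of n ends with the word w}, where w ranges over finite binary words. -/
/-- `s₂ n` is the number of 1's in the binary expansion of `n`. -/
def s2 (n : ℕ) : ℕ := (Nat.digits 2 n).sum

/-- `n ∈ [w]`: the binary expansion of `n` ends with the word `w`, i.e. the low-order
binary digits of `n` coincide with `w` (digit `i` of `n` equals `w.get i` for `i < w.length`). -/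
def endsWith (w : List Bool) (n : ℕ) : Prop :=
  ∀ i : Fin w.length, n.testBit i = w.get i

/-!
Write `n = r + 2 ^ K * q` with `r = n % 2 ^ K`. If `r + a < 2 ^ K`, adding `a` leaves `q` alone,
so `s₂ (n + a) - s₂ n = s₂ (r + a) - s₂ r`. Otherwise the addition carries out of the low `K`
bits: then `r ≥ 2 ^ K - a` has at least `K - L` ones (where `a < 2 ^ L`), while the new low part
`r + a - 2 ^ K` has at most `L` ones and `q + 1` at most one more than `q`. So the difference is
at most `2 L + 1 - K`, for `n` as well as for `r`. Taking `K` large enough that this is below `d`,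
membership in `E_{a,d}` depends only on `n % 2 ^ K`, i.e. on the last `K` binary digits of `n`.
-/

lemma s2_add_two_pow_mul {K r : ℕ} (q : ℕ) (hr : r < 2 ^ K) :
    s2 (r + 2 ^ K * q) = s2 r + s2 q := by
  rcases q.eq_zero_or_pos with rfl | hq
  · simp [s2]
  have hlen : (Nat.digits 2 r).length ≤ K := (Nat.digits_length_le_iff one_lt_two r).2 hr
  unfold s2
  rw [← Nat.add_sub_cancel' hlen, ← Nat.digits_append_zeroes_append_digits one_lt_two hq]
  simp

lemma s2_le_of_lt_two_pow {L m : ℕ} (hm : m < 2 ^ L) : s2 m ≤ L := by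
  calc s2 m ≤ (Nat.digits 2 m).length := by
        unfold s2
        simpa using List.sum_le_card_nsmul _ 1 fun x hx =>
          Nat.le_of_lt_succ (Nat.digits_lt_base one_lt_two hx)
    _ ≤ L := (Nat.digits_length_le_iff one_lt_two m).2 hm

lemma s2_two_pow_sub_one (K : ℕ) : s2 (2 ^ K - 1) = K := by
  induction K with
  | zero => simp [s2]
  | succ K ih =>
    have h : 2 ^ (K + 1) - 1 = 1 + 2 ^ 1 * (2 ^ K - 1) := by
      have := Nat.one_le_two_pow (n := K); rw [pow_succ]; omega
    rw [h, s2_add_two_pow_mul _ (by norm_num), ih]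
    simp [s2, add_comm]

open Nat in
lemma s2_add_le (m n : ℕ) : s2 (m + n) ≤ s2 m + s2 n := by
  have legendre (k : ℕ) : padicValNat 2 k ! + s2 k = k := by
    have := sub_one_mul_padicValNat_factorial (p := 2) k
    have := digit_sum_le 2 k
    unfold s2; omega
  have hchoose : (m + n).choose n ≠ 0 := (choose_pos (le_add_left n m)).ne'
  have hv : padicValNat 2 (m + n)! =
      padicValNat 2 ((m + n).choose n) + padicValNat 2 m ! + padicValNat 2 n ! := by
    rw [← add_choose_mul_factorial_mul_factorial, padicValNat.mul (by positivity) (by positivity),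
      padicValNat.mul hchoose (by positivity)]
  have := legendre m; have := legendre n; have := legendre (m + n)
  omega

lemma s2_add_of_mod_add_lt {a K n : ℕ} (h : n % 2 ^ K + a < 2 ^ K) :
    s2 (n + a) + s2 (n % 2 ^ K) = s2 (n % 2 ^ K + a) + s2 n := by
  set r := n % 2 ^ K
  set q := n / 2 ^ K
  have hn : r + 2 ^ K * q = n := Nat.mod_add_div n (2 ^ K)
  have hsn : s2 n = s2 r + s2 q := hn ▸ s2_add_two_pow_mul q (Nat.mod_lt _ (by positivity))
  have hsna : s2 (n + a) = s2 (r + a) + s2 q := by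
    rw [← s2_add_two_pow_mul q h, ← hn]; ring_nf
  omega

lemma s2_add_add_le_of_le_mod_add {a L K n : ℕ} (ha : a < 2 ^ L) (hLK : L ≤ K)
    (hcarry : 2 ^ K ≤ n % 2 ^ K + a) : s2 (n + a) + K ≤ s2 n + 2 * L + 1 := by
  set r := n % 2 ^ K
  set q := n / 2 ^ K
  have hn : r + 2 ^ K * q = n := Nat.mod_add_div n (2 ^ K)
  have hr : r < 2 ^ K := Nat.mod_lt _ (by positivity)
  have hLK' : 2 ^ L ≤ 2 ^ K := Nat.pow_le_pow_right two_pos hLK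
  have hsn : s2 n = s2 r + s2 q := hn ▸ s2_add_two_pow_mul q hr
  have hsna : s2 (n + a) = s2 (r + a - 2 ^ K) + s2 (q + 1) := by
    have : n + a = r + a - 2 ^ K + 2 ^ K * (q + 1) := by rw [← hn]; ring_nf; omega
    rw [this, s2_add_two_pow_mul _ (by omega)]
  have hr_ones : K ≤ s2 r + L := calc
    K = s2 (r + (2 ^ K - 1 - r)) := by
      rw [show r + (2 ^ K - 1 - r) = 2 ^ K - 1 by omega, s2_two_pow_sub_one]
    _ ≤ s2 r + s2 (2 ^ K - 1 - r) := s2_add_le _ _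
    _ ≤ s2 r + L := by gcongr; exact s2_le_of_lt_two_pow (by omega)
  have hlow : s2 (r + a - 2 ^ K) ≤ L := s2_le_of_lt_two_pow (by omega)
  have hsucc : s2 (q + 1) ≤ s2 q + 1 := by simpa [s2] using s2_add_le q 1
  omega

lemma exists_forall_s2_add_sub_s2_eq_iff_mod_two_pow (a : ℕ) (d : ℤ) : ∃ K : ℕ, ∀ n : ℕ,
    (s2 (n + a) : ℤ) - s2 n = d ↔ (s2 (n % 2 ^ K + a) : ℤ) - s2 (n % 2 ^ K) = d := by
  refine ⟨2 * a + 2 + d.natAbs, fun n => ?_⟩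
  set K := 2 * a + 2 + d.natAbs
  have ha : a < 2 ^ a := Nat.lt_two_pow_self
  by_cases hcarry : n % 2 ^ K + a < 2 ^ K
  · have := s2_add_of_mod_add_lt hcarry
    omega
  · have hn := s2_add_add_le_of_le_mod_add ha (by omega) (not_lt.1 hcarry)
    have hr := s2_add_add_le_of_le_mod_add (n := n % 2 ^ K) (K := K) ha (by omega)
      (by rw [Nat.mod_mod]; exact not_lt.1 hcarry)
    omega

lemma endsWith_ofFn_testBit_iff {K r : ℕ} (hr : r < 2 ^ K) (n : ℕ) :
    endsWith (List.ofFn fun i : Fin K => r.testBit i) n ↔ n % 2 ^ K = r := by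
  constructor
  · intro h
    apply Nat.eq_of_testBit_eq
    intro i
    rw [Nat.testBit_mod_two_pow]
    by_cases hi : i < K
    · simpa [hi] using h ⟨i, by simpa using hi⟩
    · simp [hi, Nat.testBit_lt_two_pow (hr.trans_le (Nat.pow_le_pow_right two_pos (not_lt.1 hi)))]
  · rintro rfl i
    simp [Nat.testBit_mod_two_pow]

lemma exists_finset_endsWith_of_forall_iff_mod_two_pow {P : ℕ → Prop} {K : ℕ}
    (hP : ∀ n, P n ↔ P (n % 2 ^ K)) :
    ∃ W : Finset (List Bool), {n | P n} = {n | ∃ w ∈ W, endsWith w n} := by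
  classical
  refine ⟨((Finset.range (2 ^ K)).filter P).image fun r => List.ofFn fun i : Fin K => r.testBit i,
    Set.ext fun n => ?_⟩
  simp only [Set.mem_ofPred_eq, Finset.exists_mem_image, Finset.mem_filter, Finset.mem_range]
  constructor
  · intro h
    have hr : n % 2 ^ K < 2 ^ K := Nat.mod_lt _ (by positivity)
    exact ⟨n % 2 ^ K, ⟨hr, (hP n).1 h⟩, (endsWith_ofFn_testBit_iff hr n).2 rfl⟩
  · rintro ⟨r, ⟨hr, hPr⟩, hw⟩
    rwa [hP, (endsWith_ofFn_testBit_iff hr n).1 hw]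

theorem E_is_finite_union_of_cylinders (a : ℕ) (d : ℤ) :
    ∃ W : Finset (List Bool),
      {n : ℕ | (s2 (n + a) : ℤ) - s2 n = d} = {n : ℕ | ∃ w ∈ W, endsWith w n} := by
  obtain ⟨K, hK⟩ := exists_forall_s2_add_sub_s2_eq_iff_mod_two_pow a d
  exact exists_finset_endsWith_of_forall_iff_mod_two_pow hK
end

section
/- For every a ∈ ℕ and d ∈ ℤ, the natural (asymptotic) density μ_a(d) of the set {n ∈ ℕ : s₂(n+a) - s₂(n) = d} exists, i.e. the limit lim_{N→∞} (1/N)·#{n < N : s₂(n+a) - s₂(n) = d} exists. -/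
open Filter

/-- The counting sequence whose limit (if it exists) is the asymptotic density
`μ_a(d)` of `{n : s₂(n+a) - s₂(n) = d}`. -/
noncomputable def densSeq (a : ℕ) (d : ℤ) (N : ℕ) : ℝ :=
  (((Finset.range N).filter fun n => (s2 (n + a) : ℤ) - s2 n = d).card : ℝ) / N

/-!
Legendre's formula `s₂(n) = n - ν₂(n!)` gives `s₂(n+a) - s₂(n) = a - ∑_{i=1}^{a} ν₂(n+i)`.
Whether this equals `d` does not change when every valuation is capped at some `K > a - d`
(a single valuation `≥ K` already makes the sum too large), and the capped valuations of `n + i`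
depend only on `n mod 2^K`. So the set in question is periodic, and a periodic set of period
`p` has density `#(S ∩ [0, p)) / p`.
-/

open Finset Function Nat Topology

namespace Nat

variable {P : ℕ → Prop} [DecidablePred P] {p : ℕ}

theorem count_mul_add_of_periodic (hP : Periodic P p) (q r : ℕ) :
    count P (q * p + r) = q * count P p + count P r := by
  induction q with
  | zero => simp
  | succ q ih =>
    have hshift (k : ℕ) : P (p + k) ↔ P k := by rw [add_comm, hP k]
    rw [show (q + 1) * p + r = p + (q * p + r) by ring, count_add]
    simp only [hshift, ih]
    ring

theorem abs_count_sub_le_of_periodic (hp : 0 < p) (hP : Periodic P p) (N : ℕ) :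
    |(count P N : ℝ) - count P p / p * N| ≤ p := by
  set r := N % p
  have hp' : (0 : ℝ) < p := by exact_mod_cast hp
  have hr : (r : ℝ) ≤ p := by exact_mod_cast (mod_lt N hp).le
  have hcount : (count P N : ℝ) = (N / p : ℕ) * count P p + count P r := by
    rw [← div_add_mod' N p, count_mul_add_of_periodic hP, div_add_mod']
    push_cast
    ring
  have hN : (N : ℝ) = (N / p : ℕ) * p + r := by exact_mod_cast (div_add_mod' N p).symm
  have hcancel : (count P N : ℝ) - count P p / p * N = count P r - count P p / p * r := by
    rw [hcount, hN]
    field_simp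
    ring
  have hdensity_le_one : (count P p : ℝ) / p ≤ 1 :=
    div_le_one_of_le₀ (by exact_mod_cast count_le P) hp'.le
  rw [hcancel]
  refine abs_sub_le_of_nonneg_of_le (by positivity) ?_ (by positivity) ?_
  · exact_mod_cast (count_le P).trans (mod_lt N hp).le
  · nlinarith

theorem tendsto_count_div_of_periodic (hp : 0 < p) (hP : Periodic P p) :
    Tendsto (fun N : ℕ ↦ (count P N : ℝ) / N) atTop (𝓝 ((count P p : ℝ) / p)) := by
  refine tendsto_sub_nhds_zero_iff.mp
    (squeeze_zero_norm' ?_ (tendsto_const_div_atTop_nhds_zero_nat (p : ℝ)))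
  filter_upwards [eventually_gt_atTop 0] with N hN
  have hN' : (N : ℝ) ≠ 0 := by positivity
  rw [← mul_div_cancel_right₀ ((count P p : ℝ) / p) hN', ← sub_div, norm_div, Real.norm_natCast,
    Real.norm_eq_abs]
  gcongr
  exact abs_count_sub_le_of_periodic hp hP N

end Nat

theorem s2_add_padicValNat_factorial (n : ℕ) : s2 n + padicValNat 2 n ! = n := by
  have h := sub_one_mul_padicValNat_factorial (p := 2) n
  have hle := Nat.digit_sum_le 2 n
  rw [s2]
  omega

theorem s2_succ (n : ℕ) : (s2 (n + 1) : ℤ) = s2 n + 1 - padicValNat 2 (n + 1) := by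
  have h := s2_add_padicValNat_factorial (n + 1)
  have h' := s2_add_padicValNat_factorial n
  rw [Nat.factorial_succ, padicValNat.mul n.add_one_ne_zero n.factorial_ne_zero] at h
  omega

theorem s2_add_sub_s2 (n a : ℕ) :
    (s2 (n + a) : ℤ) - s2 n = a - ∑ i ∈ range a, padicValNat 2 (n + i + 1) := by
  induction a with
  | zero => simp
  | succ a ih =>
    rw [← add_assoc, s2_succ, sum_range_succ]
    simp only [Nat.cast_add, Nat.cast_one]
    linarith

theorem min_padicValNat_add_pow {p x : ℕ} (hp : p ≠ 1) (hx : x ≠ 0) (K : ℕ) :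
    min (padicValNat p (x + p ^ K)) K = min (padicValNat p x) K := by
  have hiff : ∀ j ≤ K, j ≤ padicValNat p (x + p ^ K) ↔ j ≤ padicValNat p x := fun j hj ↦ by
    rw [← padicValNat_dvd_iff_le_of_ne_one hp (by omega), ← padicValNat_dvd_iff_le_of_ne_one hp hx,
      Nat.dvd_add_left (pow_dvd_pow p hj)]
  have h₁ := (hiff _ (min_le_right _ K)).1 (min_le_left _ _)
  have h₂ := (hiff _ (min_le_right _ K)).2 (min_le_left (padicValNat p x) K)
  omega

theorem Finset.natCast_sum_eq_iff_sum_min_eq {ι : Type*} (s : Finset ι) (f : ι → ℕ) {K : ℕ}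
    {c : ℤ} (hc : c < K) :
    ((∑ i ∈ s, f i : ℕ) : ℤ) = c ↔ ((∑ i ∈ s, min (f i) K : ℕ) : ℤ) = c := by
  by_cases hlarge : ∃ i ∈ s, K ≤ f i
  · obtain ⟨i, hi, hKi⟩ := hlarge
    have h₁ : K ≤ ∑ i ∈ s, f i := hKi.trans (single_le_sum (by simp) hi)
    have h₂ : K ≤ ∑ i ∈ s, min (f i) K :=
      (min_eq_right hKi).symm.le.trans (single_le_sum (f := fun i ↦ min (f i) K) (by simp) hi)
    omega
  · push Not at hlarge
    rw [sum_congr rfl fun i hi ↦ min_eq_left (hlarge i hi).le]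

theorem density_exists (a : ℕ) (d : ℤ) :
    ∃ L : ℝ, Tendsto (densSeq a d) atTop (nhds L) := by
  set K := a + d.natAbs + 1
  let P : ℕ → Prop := fun n ↦
    ((∑ i ∈ range a, min (padicValNat 2 (n + i + 1)) K : ℕ) : ℤ) = a - d
  have hP : Periodic P (2 ^ K) := fun n ↦ by
    simp only [P, show ∀ i, n + 2 ^ K + i + 1 = n + i + 1 + 2 ^ K by omega,
      min_padicValNat_add_pow (p := 2) (by norm_num) (Nat.add_one_ne_zero _)]
  have hdens : densSeq a d = fun N ↦ (count P N : ℝ) / N := by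
    funext N
    rw [densSeq, count_eq_card_filter_range]
    congr 3
    refine filter_congr fun n _ ↦ ?_
    rw [s2_add_sub_s2, sub_eq_iff_eq_add', eq_comm, ← eq_sub_iff_add_eq,
      natCast_sum_eq_iff_sum_min_eq _ _ (show (a : ℤ) - d < K by omega)]
  exact ⟨_, hdens ▸ tendsto_count_div_of_periodic (by positivity) hP⟩
end

section
/- For every a ∈ ℕ, μ_{2a} = μ_a, and for every d ∈ ℤ, μ_{2a+1}(d) = (1/2)·μ_a(d-1) + (1/2)·μ_{a+1}(d+1). -/
open Filter

lemma s2_two_mul (n : ℕ) : s2 (2 * n) = s2 n := by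
  rcases Nat.eq_zero_or_pos n with h | h
  · simp [h, s2]
  · rw [s2, Nat.digits_def' (by norm_num) (by omega)]
    simp [s2, Nat.mul_mod_right, Nat.mul_div_cancel_left _ (by norm_num : 0 < 2)]

lemma s2_two_mul_add_one (n : ℕ) : s2 (2 * n + 1) = s2 n + 1 := by
  rw [s2, Nat.digits_def' (by norm_num) (by omega)]
  have h1 : (2 * n + 1) % 2 = 1 := by omega
  have h2 : (2 * n + 1) / 2 = n := by omega
  rw [h1, h2]
  simp [s2, Nat.add_comm]

lemma card_range_two_mul (P : ℕ → Prop) [DecidablePred P] (N : ℕ) :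
    ((Finset.range (2 * N)).filter P).card
      = ((Finset.range N).filter fun m => P (2 * m)).card
      + ((Finset.range N).filter fun m => P (2 * m + 1)).card := by
  induction N with
  | zero => simp
  | succ n ih =>
    have h2 : 2 * (n + 1) = (2 * n + 1) + 1 := by ring
    rw [h2, Finset.range_add_one, Finset.range_add_one, Finset.range_add_one]
    have hm1 : (2 * n + 1) ∉ Finset.range (2 * n) := by simp
    have hm2 : (2 * n) ∉ (Finset.range (2 * n)).filter P := by simp
    have hm3 : n ∉ (Finset.range n).filter fun m => P (2 * m) := by simp
    have hm4 : n ∉ (Finset.range n).filter fun m => P (2 * m + 1) := by simp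
    by_cases hA : P (2 * n) <;> by_cases hB : P (2 * n + 1) <;>
      simp [hA, hB, Finset.filter_insert, Finset.card_insert_of_notMem, hm2, hm3, hm4,
        Finset.mem_insert, hm1, ih] <;> omega

lemma tendsto_double : Tendsto (fun N : ℕ => 2 * N) atTop atTop :=
  tendsto_atTop_atTop.mpr fun b => ⟨b, fun n hn => by omega⟩

theorem mu_recurrence (μ : ℕ → ℤ → ℝ)
    (hμ : ∀ a d, Tendsto (densSeq a d) atTop (nhds (μ a d))) :
    ∀ (a : ℕ) (d : ℤ),
      μ (2 * a) d = μ a d ∧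
      μ (2 * a + 1) d = (1 / 2) * μ a (d - 1) + (1 / 2) * μ (a + 1) (d + 1) := by
  intro a d
  constructor
  · have key : ∀ N, densSeq (2 * a) d (2 * N) = densSeq a d N := by
      intro N
      unfold densSeq
      rw [card_range_two_mul]
      have e1 : ((Finset.range N).filter fun m => (s2 (2 * m + 2 * a) : ℤ) - s2 (2 * m) = d)
          = (Finset.range N).filter fun m => (s2 (m + a) : ℤ) - s2 m = d :=
        Finset.filter_congr fun m _ => by
          rw [show 2 * m + 2 * a = 2 * (m + a) from by ring, s2_two_mul, s2_two_mul]
      have e2 : ((Finset.range N).filter fun m => (s2 (2 * m + 1 + 2 * a) : ℤ) - s2 (2 * m + 1) = d)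
          = (Finset.range N).filter fun m => (s2 (m + a) : ℤ) - s2 m = d :=
        Finset.filter_congr fun m _ => by
          rw [show 2 * m + 1 + 2 * a = 2 * (m + a) + 1 from by ring, s2_two_mul_add_one,
            s2_two_mul_add_one]
          push_cast
          constructor <;> intro h <;> linarith
      rw [e1, e2]
      set c := ((Finset.range N).filter fun m => (s2 (m + a) : ℤ) - s2 m = d).card
      have : ((c + c : ℕ) : ℝ) / ((2 * N : ℕ) : ℝ) = (2 * (c : ℝ)) / (2 * (N : ℝ)) := by
        push_cast; ring_nf
      rw [this, mul_div_mul_left _ _ (two_ne_zero)]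
    have h1 : Tendsto (fun N => densSeq (2 * a) d (2 * N)) atTop (nhds (μ (2 * a) d)) :=
      (hμ (2 * a) d).comp tendsto_double
    simp only [key] at h1
    exact tendsto_nhds_unique h1 (hμ a d)
  · have key : ∀ N, densSeq (2 * a + 1) d (2 * N)
        = (1 / 2) * densSeq a (d - 1) N + (1 / 2) * densSeq (a + 1) (d + 1) N := by
      intro N
      unfold densSeq
      rw [card_range_two_mul]
      have e1 : ((Finset.range N).filter fun m => (s2 (2 * m + (2 * a + 1)) : ℤ) - s2 (2 * m) = d)
          = (Finset.range N).filter fun m => (s2 (m + a) : ℤ) - s2 m = d - 1 :=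
        Finset.filter_congr fun m _ => by
          rw [show 2 * m + (2 * a + 1) = 2 * (m + a) + 1 from by ring, s2_two_mul_add_one,
            s2_two_mul]
          push_cast
          constructor <;> intro h <;> linarith
      have e2 : ((Finset.range N).filter fun m =>
            (s2 (2 * m + 1 + (2 * a + 1)) : ℤ) - s2 (2 * m + 1) = d)
          = (Finset.range N).filter fun m => (s2 (m + (a + 1)) : ℤ) - s2 m = d + 1 :=
        Finset.filter_congr fun m _ => by
          rw [show 2 * m + 1 + (2 * a + 1) = 2 * (m + (a + 1)) from by ring, s2_two_mul,
            s2_two_mul_add_one]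
          push_cast
          constructor <;> intro h <;> linarith
      rw [e1, e2]
      set c1 := ((Finset.range N).filter fun m => (s2 (m + a) : ℤ) - s2 m = d - 1).card
      set c2 := ((Finset.range N).filter fun m => (s2 (m + (a + 1)) : ℤ) - s2 m = d + 1).card
      rcases Nat.eq_zero_or_pos N with h | h
      · simp [h]
      · have hN : ((N : ℝ)) ≠ 0 := by positivity
        push_cast
        field_simp
    have h1 : Tendsto (fun N => densSeq (2 * a + 1) d (2 * N)) atTop (nhds (μ (2 * a + 1) d)) :=
      (hμ (2 * a + 1) d).comp tendsto_double
    simp only [key] at h1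
    have h2 : Tendsto (fun N => (1 / 2) * densSeq a (d - 1) N
        + (1 / 2) * densSeq (a + 1) (d + 1) N) atTop
        (nhds ((1 / 2) * μ a (d - 1) + (1 / 2) * μ (a + 1) (d + 1))) :=
      ((hμ a (d - 1)).const_mul _).add ((hμ (a + 1) (d + 1)).const_mul _)
    exact tendsto_nhds_unique h1 h2
end

section
/- Suppose (b_j)_{j∈ℕ} ∈ {-1,1}^ℕ and for each n define C_{2,n} = max over pairs d₁ < d₂ and M with M + d₂ ≤ n of |∑_{k=1}^{M} b_{k+d₁} b_{k+d₂}|. If for some fixed ε > 0 there exists n₀ such that C_{2,n} < n^{1/2+ε} for all n ≥ n₀, and ε < 1/2, then lim_{n→∞} (1/n) ∑_{i=1}^{n} ∑_{k=0}^{n-i} b_{k+i} b_k / 2^i = 0. -/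
open Filter Finset

/-! The shifted autocorrelation `∑_{k ≤ n-i} b_{k+i} b_k` differs from an entry of the family
maximised by `C_{2,n}` (with `d₁ = 0`, `d₂ = i`, `M = n - i`) only by the term `b_i b_0`, so it is
at most `1 + C_{2,n}` in absolute value. The weights `2^{-i}` sum to less than `1`, so the whole
average is `O((1 + C_{2,n}) / n) = O(n^{ε - 1/2})`, which tends to `0` since `ε < 1/2`. -/

/-- The family of two-point correlations whose maximum is `C_{2,n}`. -/
def correlationSet (b : ℕ → ℝ) (n : ℕ) : Set ℝ :=
  {x : ℝ | ∃ d₁ d₂ M : ℕ, d₁ < d₂ ∧ M + d₂ ≤ n ∧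
    x = |∑ k ∈ Icc 1 M, b (k + d₁) * b (k + d₂)|}

theorem sum_range_succ_eq_add_sum_Icc {M : Type*} [AddCommMonoid M] (f : ℕ → M) (m : ℕ) :
    ∑ k ∈ range (m + 1), f k = f 0 + ∑ k ∈ Icc 1 m, f k := by
  rw [sum_range_eq_add_Ico f (by omega : 0 < m + 1), Ico_add_one_right_eq_Icc]

theorem abs_sum_range_mul_shift_le {b : ℕ → ℝ} (hb : ∀ j, |b j| ≤ 1) {n i : ℕ} {c : ℝ}
    (hi : 1 ≤ i) (hin : i ≤ n) (hc : c ∈ upperBounds (correlationSet b n)) :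
    |∑ k ∈ range (n - i + 1), b (k + i) * b k| ≤ 1 + c := by
  have hcorr : |∑ k ∈ Icc 1 (n - i), b (k + i) * b k| ≤ c :=
    hc ⟨0, i, n - i, hi, by omega, by simp only [add_zero, mul_comm]⟩
  have hfirst : |b (0 + i) * b 0| ≤ 1 := by
    rw [abs_mul]
    exact mul_le_one₀ (hb _) (abs_nonneg _) (hb 0)
  rw [sum_range_succ_eq_add_sum_Icc]
  exact (abs_add_le _ _).trans (add_le_add hfirst hcorr)

theorem sum_Icc_one_half_pow (n : ℕ) : ∑ i ∈ Icc 1 n, ((1 : ℝ) / 2) ^ i = 1 - (1 / 2) ^ n := by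
  induction n with
  | zero => simp
  | succ n ih => rw [sum_Icc_succ_top (by omega), ih]; ring

theorem abs_sum_Icc_div_two_pow_le {x : ℕ → ℝ} {B : ℝ} {n : ℕ} (hB : 0 ≤ B)
    (hx : ∀ i ∈ Icc 1 n, |x i| ≤ B) :
    |∑ i ∈ Icc 1 n, x i / 2 ^ i| ≤ B := by
  calc |∑ i ∈ Icc 1 n, x i / 2 ^ i|
      ≤ ∑ i ∈ Icc 1 n, |x i / 2 ^ i| := abs_sum_le_sum_abs _ _
    _ ≤ ∑ i ∈ Icc 1 n, B * (1 / 2) ^ i := by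
        gcongr with i hi
        rw [abs_div, abs_of_pos (by positivity : (0 : ℝ) < 2 ^ i), one_div_pow, mul_one_div]
        exact div_le_div_of_nonneg_right (hx i hi) (by positivity)
    _ = B * (1 - (1 / 2) ^ n) := by rw [← mul_sum, sum_Icc_one_half_pow]
    _ ≤ B := mul_le_of_le_one_right hB (by linarith [pow_nonneg (by norm_num : (0 : ℝ) ≤ 1 / 2) n])

theorem tendsto_one_add_rpow_div_atTop {a : ℝ} (ha : a < 1) :
    Tendsto (fun n : ℕ => (1 + (n : ℝ) ^ a) / n) atTop (nhds 0) := by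
  have hpow : Tendsto (fun n : ℕ => (n : ℝ) ^ (a - 1)) atTop (nhds 0) := by
    simpa [Function.comp_def] using
      (tendsto_rpow_neg_atTop (by linarith : 0 < -(a - 1))).comp tendsto_natCast_atTop_atTop
  have hsum := tendsto_one_div_atTop_nhds_zero_nat.add hpow
  rw [add_zero] at hsum
  refine hsum.congr' ?_
  filter_upwards [eventually_ge_atTop 1] with n hn
  rw [Real.rpow_sub (by exact_mod_cast hn), Real.rpow_one, add_div]

theorem correlation_sum_limit_general (b : ℕ → ℝ) (hb : ∀ j, b j = 1 ∨ b j = -1)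
    (C2 : ℕ → ℝ)
    (hC2 : ∀ n ≥ 1, IsGreatest
      {x : ℝ | ∃ d₁ d₂ M : ℕ, d₁ < d₂ ∧ M + d₂ ≤ n ∧
        x = |∑ k ∈ Icc 1 M, b (k + d₁) * b (k + d₂)|} (C2 n))
    (ε : ℝ) (hε' : ε < 1 / 2)
    (n₀ : ℕ) (hbound : ∀ n ≥ n₀, C2 n < (n : ℝ) ^ ((1 : ℝ) / 2 + ε)) :
    Tendsto (fun n : ℕ =>
        (1 / (n : ℝ)) * ∑ i ∈ Icc 1 n, ∑ k ∈ range (n - i + 1), b (k + i) * b k / 2 ^ i)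
      atTop (nhds 0) := by
  have habs : ∀ j, |b j| ≤ 1 := fun j => by rcases hb j with h | h <;> simp [h]
  refine squeeze_zero_norm' ?_ (tendsto_one_add_rpow_div_atTop (by linarith : 1 / 2 + ε < 1))
  filter_upwards [eventually_ge_atTop (max n₀ 1)] with n hn
  have hn₀ : n₀ ≤ n := le_of_max_le_left hn
  have hn₁ : 1 ≤ n := le_of_max_le_right hn
  obtain ⟨⟨d₁, d₂, M, -, -, hC2_eq⟩, hC2_ub⟩ := hC2 n hn₁
  have hweighted : |∑ i ∈ Icc 1 n, ∑ k ∈ range (n - i + 1), b (k + i) * b k / 2 ^ i|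
      ≤ 1 + C2 n := by
    simp_rw [← sum_div]
    refine abs_sum_Icc_div_two_pow_le (by rw [hC2_eq]; positivity) fun i hi => ?_
    exact abs_sum_range_mul_shift_le habs (mem_Icc.1 hi).1 (mem_Icc.1 hi).2 hC2_ub
  rw [Real.norm_eq_abs, abs_mul, abs_of_pos (by positivity), one_div_mul_eq_div]
  gcongr
  linarith [hbound n hn₀]

theorem correlation_sum_limit (b : ℕ → ℝ) (hb : ∀ j, b j = 1 ∨ b j = -1)
    (C2 : ℕ → ℝ)
    (hC2 : ∀ n ≥ 1, IsGreatest
      {x : ℝ | ∃ d₁ d₂ M : ℕ, d₁ < d₂ ∧ M + d₂ ≤ n ∧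
        x = |∑ k ∈ Icc 1 M, b (k + d₁) * b (k + d₂)|} (C2 n))
    (ε : ℝ) (hε : 0 < ε) (hε' : ε < 1 / 2)
    (n₀ : ℕ) (hbound : ∀ n ≥ n₀, C2 n < (n : ℝ) ^ ((1 : ℝ) / 2 + ε)) :
    Tendsto (fun n : ℕ =>
        (1 / (n : ℝ)) * ∑ i ∈ Icc 1 n, ∑ k ∈ range (n - i + 1), b (k + i) * b k / 2 ^ i)
      atTop (nhds 0) :=
  correlation_sum_limit_general b hb C2 hC2 ε hε' n₀ hbound
end

section
/- Fix p, q ∈ ℕ. There exists a constant C > 0 such that for all n and all (a₀,...,aₙ) ∈ {0,1}^{n+1}, the sum of ‖M‖ over all products M = T₀ ⋯ Tₙ, where exactly p of the Tⱼ equal α_{aⱼ}, exactly q of the Tⱼ equal β_{aⱼ}, and all remaining Tⱼ equal I_{aⱼ}, is at most C·(n+1)^q. -/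
open Matrix Finset

/-- `I₀ = [[1,0],[1/2,1/2]]`, `I₁ = [[1/2,1/2],[0,1]]`. -/
noncomputable def Imat : Fin 2 → Matrix (Fin 2) (Fin 2) ℝ
  | 0 => !![1, 0; 1/2, 1/2]
  | 1 => !![1/2, 1/2; 0, 1]

/-- `α₀ = (1/2)[[0,0],[1,-1]]`, `α₁ = (1/2)[[1,-1],[0,0]]`. -/
noncomputable def amat : Fin 2 → Matrix (Fin 2) (Fin 2) ℝ
  | 0 => !![0, 0; 1/2, -1/2]
  | 1 => !![1/2, -1/2; 0, 0]

/-- `β₀ = (1/2)[[0,0],[1,1]]`, `β₁ = (1/2)[[1,1],[0,0]]`. -/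
noncomputable def bmat : Fin 2 → Matrix (Fin 2) (Fin 2) ℝ
  | 0 => !![0, 0; 1/2, 1/2]
  | 1 => !![1/2, 1/2; 0, 0]

/-- The maximum-row-sum norm of a real 2×2 matrix. -/
noncomputable def rowNorm (M : Matrix (Fin 2) (Fin 2) ℝ) : ℝ :=
  max (|M 0 0| + |M 0 1|) (|M 1 0| + |M 1 1|)

/-- The product `T₀ T₁ ⋯ Tₙ` where `Tⱼ = α_{aⱼ}` for `j ∈ s`, `Tⱼ = β_{aⱼ}` for `j ∈ t`
and `Tⱼ = I_{aⱼ}` otherwise. -/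
noncomputable def prodIAB (n : ℕ) (a : ℕ → Fin 2) (s t : Finset ℕ) :
    Matrix (Fin 2) (Fin 2) ℝ :=
  ((List.range (n + 1)).map fun j =>
    if j ∈ s then amat (a j) else if j ∈ t then bmat (a j) else Imat (a j)).prod


/-!
Since `αᵢ Iₖ = ½ αᵢ` and `αᵢ αₖ = ±½ αᵢ`, a factor `α` at position `j` followed by `g` factors of
type `α` or `I` before the next `β` (or the end of the product) forces the norm of the whole
product below `2⁻ᵍ`, every factor having norm at most `1`. Fix `t`, write `g j` for this gap and
pick `r < 1` with `rᵖ ≥ ½`. Then the norm is at most `min_{j ∈ s} 2^(-g j) ≤ ∏_{j ∈ s} r^(g j)`, and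
`∑_{#s = p} ∏_{j ∈ s} xⱼ ≤ ∏ⱼ (1 + xⱼ) ≤ exp (∑ⱼ xⱼ)`, where `∑ⱼ r^(g j) ≤ (q + 1) / (1 - r)`
because positions sharing the same next element of `t ∪ {n + 1}` have distinct gaps. So the sum
over `s` is bounded independently of `n`, and there are at most `(n + 1)^q` choices of `t`.
-/

theorem norm_list_prod_le_one {R : Type*} [SeminormedRing R] [NormOneClass R] {l : List R}
    (h : ∀ x ∈ l, ‖x‖ ≤ 1) : ‖l.prod‖ ≤ 1 := by
  induction l with
  | nil => simp
  | cons x l ih =>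
    rw [List.forall_mem_cons] at h
    rw [List.prod_cons]
    exact (norm_mul_le _ _).trans (mul_le_one₀ h.1 (norm_nonneg _) (ih h.2))

theorem norm_mul_list_prod_of_mul_eq_smul {𝕜 R : Type*} [NormedField 𝕜] [SeminormedRing R]
    [NormedAlgebra 𝕜 R] {A : R} {ρ : ℝ} {l : List R}
    (h : ∀ x ∈ l, ∃ c : 𝕜, ‖c‖ = ρ ∧ A * x = c • A) : ‖A * l.prod‖ = ρ ^ l.length * ‖A‖ := by
  induction l with
  | nil => simp
  | cons x l ih =>
    rw [List.forall_mem_cons] at h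
    obtain ⟨c, hc, hAx⟩ := h.1
    rw [List.prod_cons, ← mul_assoc, hAx, smul_mul_assoc, norm_smul, ih h.2, hc,
      List.length_cons, pow_succ']
    ring

theorem List.range_eq_append_cons_append {j g N : ℕ} (h : j + g + 1 ≤ N) :
    List.range N =
      List.range j ++ j :: List.range' (j + 1) g ++ List.range' (j + g + 1) (N - (j + g + 1)) := by
  have e1 := List.range'_append_1 (s := 0) (m := j) (n := g + 1)
  have e2 := List.range'_append_1 (s := 0) (m := j + g + 1) (n := N - (j + g + 1))
  simp only [zero_add] at e1 e2
  rw [List.range_eq_range', List.range_eq_range', ← List.range'_succ, e1, ← add_assoc, e2]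
  congr 1
  omega

theorem sum_pow_le_of_injOn {ι : Type*} {J : Finset ι} {g : ι → ℕ} (hg : Set.InjOn g J)
    {r : ℝ} (hr0 : 0 ≤ r) (hr1 : r < 1) : ∑ j ∈ J, r ^ g j ≤ (1 - r)⁻¹ := by
  classical
  rw [← Finset.sum_image hg, ← tsum_geometric_of_lt_one hr0 hr1]
  exact (summable_geometric_of_lt_one hr0 hr1).sum_le_tsum _ fun d _ => pow_nonneg hr0 d

theorem sum_powersetCard_prod_le_exp_sum {ι : Type*} (u : Finset ι) (p : ℕ) {x : ι → ℝ}
    (hx : ∀ i, 0 ≤ x i) : ∑ s ∈ u.powersetCard p, ∏ i ∈ s, x i ≤ Real.exp (∑ i ∈ u, x i) :=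
  calc ∑ s ∈ u.powersetCard p, ∏ i ∈ s, x i
      ≤ ∑ s ∈ u.powerset, ∏ i ∈ s, x i :=
        sum_le_sum_of_subset_of_nonneg (fun _ hs => mem_powerset.2 (mem_powersetCard.1 hs).1)
          fun _ _ _ => prod_nonneg fun i _ => hx i
    _ = ∏ i ∈ u, (1 + x i) := (prod_one_add u).symm
    _ ≤ Real.exp (∑ i ∈ u, x i) := Real.prod_one_add_le_exp_sum u hx

theorem exists_pow_le_prod_pow {ι : Type*} {s : Finset ι} (hs : s.Nonempty) (g : ι → ℕ)
    {c r : ℝ} (hc : 0 ≤ c) (hr0 : 0 ≤ r) (hr1 : r ≤ 1) (hcr : c ≤ r ^ #s) :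
    ∃ j ∈ s, c ^ g j ≤ ∏ i ∈ s, r ^ g i := by
  obtain ⟨j, hj, hmax⟩ := s.exists_max_image g hs
  refine ⟨j, hj, ?_⟩
  calc c ^ g j ≤ (r ^ #s) ^ g j := pow_le_pow_left₀ hc hcr _
    _ = r ^ (#s * g j) := (pow_mul r _ _).symm
    _ ≤ r ^ ∑ i ∈ s, g i :=
        pow_le_pow_of_le_one hr0 hr1 (by simpa using sum_le_card_nsmul s g _ hmax)
    _ = ∏ i ∈ s, r ^ g i := (prod_pow_eq_pow_sum s g r).symm

theorem exists_half_le_pow (p : ℕ) : ∃ r : ℝ, 0 ≤ r ∧ r < 1 ∧ 1 / 2 ≤ r ^ p := by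
  set ε : ℝ := (2 * (p + 1))⁻¹
  have hε : ε ≤ 1 / 2 := by
    rw [one_div]
    exact inv_anti₀ two_pos (by linarith [p.cast_nonneg (α := ℝ)])
  refine ⟨1 - ε, by linarith, sub_lt_self 1 (by positivity), ?_⟩
  calc (1 / 2 : ℝ) ≤ 1 + p * -ε := by
        simp only [ε]
        field_simp
        linarith
    _ ≤ (1 - ε) ^ p := sub_eq_add_neg 1 ε ▸ one_add_mul_le_pow (by linarith) p

-- `0` when no element of `U` lies above `j`, as `sInf ∅ = 0`.
noncomputable def gapToNext (U : Finset ℕ) (j : ℕ) : ℕ := sInf {d | j + d + 1 ∈ U}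

theorem add_gapToNext_add_one_mem {U : Finset ℕ} {j : ℕ} (h : ∃ k ∈ U, j < k) :
    j + gapToNext U j + 1 ∈ U := by
  obtain ⟨k, hk, hjk⟩ := h
  exact Nat.sInf_mem (s := {d | j + d + 1 ∈ U})
    ⟨k - j - 1, by simpa [show j + (k - j - 1) + 1 = k by omega]⟩

theorem add_add_one_notMem_of_lt_gapToNext {U : Finset ℕ} {j d : ℕ} (h : d < gapToNext U j) :
    j + d + 1 ∉ U :=
  Nat.notMem_of_lt_sInf (s := {d | j + d + 1 ∈ U}) h

theorem gapToNext_le {U : Finset ℕ} {j d : ℕ} (h : j + d + 1 ∈ U) : gapToNext U j ≤ d :=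
  Nat.sInf_le h

theorem sum_pow_gapToNext_le {U J : Finset ℕ} (hU : ∀ j ∈ J, ∃ k ∈ U, j < k) {r : ℝ}
    (hr0 : 0 ≤ r) (hr1 : r < 1) : ∑ j ∈ J, r ^ gapToNext U j ≤ #U * (1 - r)⁻¹ := by
  rw [← sum_fiberwise_of_maps_to (g := fun j => j + gapToNext U j + 1)
    fun j hj => add_gapToNext_add_one_mem (hU j hj)]
  calc _ ≤ ∑ _m ∈ U, (1 - r)⁻¹ := by
        refine sum_le_sum fun m _ => sum_pow_le_of_injOn ?_ hr0 hr1
        intro x hx y hy hxy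
        have hx' := (mem_filter.1 hx).2
        have hy' := (mem_filter.1 hy).2
        omega
    _ = #U * (1 - r)⁻¹ := by rw [sum_const, nsmul_eq_mul]

noncomputable def factorIAB (a : ℕ → Fin 2) (s t : Finset ℕ) (j : ℕ) : Matrix (Fin 2) (Fin 2) ℝ :=
  if j ∈ s then amat (a j) else if j ∈ t then bmat (a j) else Imat (a j)

theorem prodIAB_eq_prod_factorIAB (n : ℕ) (a : ℕ → Fin 2) (s t : Finset ℕ) :
    prodIAB n a s t = ((List.range (n + 1)).map (factorIAB a s t)).prod :=
  rfl

theorem amat_mul_Imat (i k : Fin 2) : amat i * Imat k = (1 / 2 : ℝ) • amat i := by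
  fin_cases i <;> fin_cases k <;>
    · ext r c
      fin_cases r <;> fin_cases c <;> norm_num [amat, Imat, Matrix.mul_apply]

theorem amat_mul_amat (i k : Fin 2) : ∃ c : ℝ, |c| = 1 / 2 ∧ amat i * amat k = c • amat i := by
  fin_cases k
  · refine ⟨-1 / 2, by norm_num [abs_div], ?_⟩
    fin_cases i <;> · ext r c; fin_cases r <;> fin_cases c <;> norm_num [amat, Matrix.mul_apply]
  · refine ⟨1 / 2, by norm_num, ?_⟩
    fin_cases i <;> · ext r c; fin_cases r <;> fin_cases c <;> norm_num [amat, Matrix.mul_apply]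

section LinftyOpNorm

attribute [local instance] Matrix.linftyOpNormedRing Matrix.linftyOpNormedAlgebra

theorem rowNorm_eq_norm (M : Matrix (Fin 2) (Fin 2) ℝ) : rowNorm M = ‖M‖ := by
  rw [Matrix.linfty_opNorm_def]
  simp [rowNorm, Fin.univ_succ]

theorem norm_factorIAB_le_one (a : ℕ → Fin 2) (s t : Finset ℕ) (j : ℕ) :
    ‖factorIAB a s t j‖ ≤ 1 := by
  rw [← rowNorm_eq_norm, factorIAB]
  generalize a j = i
  fin_cases i <;> split_ifs <;> norm_num [rowNorm, amat, bmat, Imat, abs_div]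

theorem amat_mul_factorIAB (i : Fin 2) {a : ℕ → Fin 2} {s t : Finset ℕ} {k : ℕ} (hk : k ∉ t) :
    ∃ c : ℝ, ‖c‖ = 1 / 2 ∧ amat i * factorIAB a s t k = c • amat i := by
  rw [factorIAB, if_neg hk]
  split_ifs
  · exact amat_mul_amat i (a k)
  · exact ⟨1 / 2, by norm_num, amat_mul_Imat i (a k)⟩

theorem norm_list_map_factorIAB_prod_le_one (a : ℕ → Fin 2) (s t : Finset ℕ) (l : List ℕ) :
    ‖(l.map (factorIAB a s t)).prod‖ ≤ 1 :=
  norm_list_prod_le_one <| List.forall_mem_map.2 fun k _ => norm_factorIAB_le_one a s t k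

theorem norm_prodIAB_le_half_pow {n : ℕ} {a : ℕ → Fin 2} {s t : Finset ℕ} {j g : ℕ} (hj : j ∈ s)
    (hgap : ∀ d < g, j + d + 1 ∉ t) (hg : j + g + 1 ≤ n + 1) :
    ‖prodIAB n a s t‖ ≤ (1 / 2) ^ g := by
  have hfj : factorIAB a s t j = amat (a j) := if_pos hj
  rw [prodIAB_eq_prod_factorIAB, List.range_eq_append_cons_append hg]
  simp only [List.map_append, List.map_cons, List.prod_append, List.prod_cons]
  rw [hfj]
  set f := factorIAB a s t
  have hbound (l : List ℕ) : ‖(l.map f).prod‖ ≤ 1 := norm_list_map_factorIAB_prod_le_one a s t l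
  have hdecay : ‖amat (a j) * ((List.range' (j + 1) g).map f).prod‖ ≤ (1 / 2) ^ g := by
    rw [norm_mul_list_prod_of_mul_eq_smul (𝕜 := ℝ) (ρ := 1 / 2)]
    · simpa using hfj ▸ norm_factorIAB_le_one a s t j
    · simp only [List.mem_map, List.mem_range']
      rintro _ ⟨_, ⟨d, hd, rfl⟩, rfl⟩
      exact amat_mul_factorIAB _ (by simpa [add_right_comm] using hgap d hd)
  calc _ ≤ ‖((List.range j).map f).prod‖ * ‖amat (a j) * ((List.range' (j + 1) g).map f).prod‖
        * ‖((List.range' (j + g + 1) (n + 1 - (j + g + 1))).map f).prod‖ := norm_mul₃_le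
    _ ≤ 1 * (1 / 2) ^ g * 1 := by gcongr <;> exact hbound _
    _ = (1 / 2) ^ g := by ring

theorem norm_prodIAB_le_half_pow_gapToNext {n : ℕ} {a : ℕ → Fin 2} {s t : Finset ℕ} {j : ℕ}
    (hs : s ⊆ range (n + 1)) (hj : j ∈ s) :
    ‖prodIAB n a s t‖ ≤ (1 / 2) ^ gapToNext (insert (n + 1) t) j := by
  have hjn : j < n + 1 := mem_range.1 (hs hj)
  have hle : gapToNext (insert (n + 1) t) j ≤ n - j :=
    gapToNext_le (by rw [show j + (n - j) + 1 = n + 1 by omega]; exact mem_insert_self _ _)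
  exact norm_prodIAB_le_half_pow hj
    (fun d hd hdt => add_add_one_notMem_of_lt_gapToNext hd (mem_insert_of_mem hdt)) (by omega)

theorem norm_prodIAB_le_prod_pow {n : ℕ} {a : ℕ → Fin 2} {s t : Finset ℕ}
    (hs : s ⊆ range (n + 1)) {r : ℝ} (hr0 : 0 ≤ r) (hr1 : r ≤ 1) (hr : 1 / 2 ≤ r ^ #s) :
    ‖prodIAB n a s t‖ ≤ ∏ j ∈ s, r ^ gapToNext (insert (n + 1) t) j := by
  rcases s.eq_empty_or_nonempty with rfl | hne
  · simpa [prodIAB_eq_prod_factorIAB] using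
      norm_list_map_factorIAB_prod_le_one a ∅ t (List.range (n + 1))
  · obtain ⟨j, hj, hle⟩ := exists_pow_le_prod_pow hne _ (by norm_num) hr0 hr1 hr
    exact (norm_prodIAB_le_half_pow_gapToNext hs hj).trans hle

theorem sum_rowNorm_prodIAB_le (n : ℕ) (a : ℕ → Fin 2) (p : ℕ) (t : Finset ℕ) {r : ℝ}
    (hr0 : 0 ≤ r) (hr1 : r < 1) (hr : 1 / 2 ≤ r ^ p) :
    ∑ s ∈ (range (n + 1)).powersetCard p, rowNorm (prodIAB n a s t)
      ≤ Real.exp ((#t + 1) * (1 - r)⁻¹) :=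
  calc ∑ s ∈ (range (n + 1)).powersetCard p, rowNorm (prodIAB n a s t)
      ≤ ∑ s ∈ (range (n + 1)).powersetCard p, ∏ j ∈ s, r ^ gapToNext (insert (n + 1) t) j := by
        refine sum_le_sum fun s hs => ?_
        obtain ⟨hsub, hcard⟩ := mem_powersetCard.1 hs
        rw [rowNorm_eq_norm]
        exact norm_prodIAB_le_prod_pow hsub hr0 hr1.le (hcard ▸ hr)
    _ ≤ Real.exp (∑ j ∈ range (n + 1), r ^ gapToNext (insert (n + 1) t) j) :=
        sum_powersetCard_prod_le_exp_sum _ _ fun j => pow_nonneg hr0 _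
    _ ≤ Real.exp (#(insert (n + 1) t) * (1 - r)⁻¹) :=
        Real.exp_le_exp.2 <| sum_pow_gapToNext_le
          (fun j hj => ⟨n + 1, mem_insert_self _ _, mem_range.1 hj⟩) hr0 hr1
    _ ≤ Real.exp ((#t + 1) * (1 - r)⁻¹) := by
        have : 0 ≤ (1 - r)⁻¹ := inv_nonneg.2 (sub_nonneg.2 hr1.le)
        gcongr
        exact_mod_cast card_insert_le _ _

end LinftyOpNorm

theorem type_p_q_contribution (p q : ℕ) :
    ∃ C : ℝ, 0 < C ∧ ∀ (n : ℕ) (a : ℕ → Fin 2),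
      ∑ s ∈ (range (n + 1)).powersetCard p,
        ∑ t ∈ (range (n + 1)).powersetCard q,
          (if Disjoint s t then rowNorm (prodIAB n a s t) else 0)
        ≤ C * ((n : ℝ) + 1) ^ q := by
  obtain ⟨r, hr0, hr1, hr⟩ := exists_half_le_pow p
  set C := Real.exp ((q + 1) * (1 - r)⁻¹)
  refine ⟨C, Real.exp_pos _, fun n a => ?_⟩
  have hterm (s t : Finset ℕ) :
      (if Disjoint s t then rowNorm (prodIAB n a s t) else 0) ≤ rowNorm (prodIAB n a s t) := by
    split_ifs
    · exact le_rfl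
    · exact le_max_of_le_left (by positivity)
  rw [sum_comm]
  calc _ ≤ ∑ t ∈ (range (n + 1)).powersetCard q, C := by
        refine sum_le_sum fun t ht => ?_
        have hsum := sum_rowNorm_prodIAB_le n a p t hr0 hr1 hr
        rw [(mem_powersetCard.1 ht).2] at hsum
        exact (sum_le_sum fun s _ => hterm s t).trans hsum
    _ = (n + 1).choose q * C := by rw [sum_const, card_powersetCard, card_range, nsmul_eq_mul]
    _ ≤ C * ((n : ℝ) + 1) ^ q := by
        rw [mul_comm]
        gcongr
        exact_mod_cast Nat.choose_le_pow _ _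
end
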